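/- arXiv:1103.5033 — 2 statements merged into one kernel-verified Lean document; each statement's English description precedes it below -/
import Mathlib

section
/- Under the log-exponential-power-law class conditions (h(y) = L(y)·y^ρ, ρ > 1, L twice differentiable, slowly varying, y·L'(y)/L(y) → 0, (y·L'(y)/L(y))' → 0, h strictly increasing to ∞ with h' > 0), let y†(n) solve h(y†(n)) = ln n, let ψ(y) = h(y) − ln h'(y), let y*(q) solve ψ'(y*) = q, and let M_T(n,q) = ∫_0^{y†(n)} h'(y)·exp(q·y − h(y)) dy. Then along any sequence (n, q(n)) with q(n) → ∞ and y*(q(n)) ≥ y†(n) (the supercritical regime q ≥ q_c(n)), ln M_T(n, q(n)) ∼ q(n)·y†(n) − h(y†(n)) + ln h'(y†(n)) as n → ∞, i.e. the ratio of the two sides tends to 1; in particular ln M_T is asymptotically linear in q in this regime. -/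
/-!
Write the integrand as `exp (g y)` with `g y = q y - ψ y`. Because `y L'/L` and its derivative
tend to `0`, `ψ' = h' - h''/h'` eventually dominates `log y`. In the supercritical regime,
Darboux's theorem and the uniqueness of `y*(q)` force `ψ' ≤ q` on `(0, y†)`; hence `g` is
nondecreasing there and `log y† ≤ q`. The integral is then squeezed between
`q⁻¹ e^{g(y†) - 1}` (the contribution of `[y† - 1/q, y†]`, where `ψ` is nondecreasing) and
`y† e^{g(y†)}`, so `ln M_T = g(y†) + O(q)`, while `g(y†)/q → ∞` since `g(y†) ≥ g(y)` for each
fixed `y`.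
-/

open Filter Real MeasureTheory intervalIntegral Set Topology

theorem hasDerivAt_mul_rpow {L : ℝ → ℝ} {a y : ℝ} (hy : 0 < y) (hL : DifferentiableAt ℝ L y)
    (hLy : L y ≠ 0) :
    HasDerivAt (fun z => L z * z ^ a) (L y * y ^ (a - 1) * (a + y * deriv L y / L y)) y := by
  refine (hL.hasDerivAt.mul (hasDerivAt_rpow_const (p := a) (Or.inl hy.ne'))).congr_deriv ?_
  rw [rpow_sub_one hy.ne']
  field_simp
  ring

theorem hasDerivAt_of_eq_mul_rpow {L h : ℝ → ℝ} {ρ y : ℝ} (hh : ∀ y > 0, h y = L y * y ^ ρ)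
    (hy : 0 < y) (hL : DifferentiableAt ℝ L y) (hLy : L y ≠ 0) :
    HasDerivAt h (L y * y ^ (ρ - 1) * (ρ + y * deriv L y / L y)) y :=
  (hasDerivAt_mul_rpow hy hL hLy).congr_of_eventuallyEq (eventually_of_mem (Ioi_mem_nhds hy) hh)

theorem exists_pos_le_mul_rpow {L : ℝ → ℝ} (hpos : ∀ y > 0, 0 < L y)
    (hdiff : ∀ y > 0, DifferentiableAt ℝ L y)
    (hindex : Tendsto (fun y => y * deriv L y / L y) atTop (𝓝 0)) {α : ℝ} (hα : 0 < α) :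
    ∃ c > 0, ∀ᶠ y in atTop, c ≤ L y * y ^ α := by
  obtain ⟨Z, hZ⟩ := eventually_atTop.1
    ((hindex.eventually (lt_mem_nhds (neg_lt_zero.2 hα))).and (eventually_gt_atTop 0))
  have hmono : MonotoneOn (fun z => L z * z ^ α) (Ici Z) := by
    refine monotoneOn_of_hasDerivWithinAt_nonneg (convex_Ici Z)
      (f' := fun y => L y * y ^ (α - 1) * (α + y * deriv L y / L y))
      (fun y hy => ?_) (fun y hy => ?_) (fun y hy => ?_)
    · have hy0 := (hZ y hy).2
      exact (hasDerivAt_mul_rpow hy0 (hdiff y hy0) (hpos y hy0).ne').continuousAt.continuousWithinAt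
    · rw [interior_Ici] at hy
      have hy0 := (hZ y hy.le).2
      exact (hasDerivAt_mul_rpow hy0 (hdiff y hy0) (hpos y hy0).ne').hasDerivWithinAt
    · rw [interior_Ici] at hy
      obtain ⟨hs, hy0⟩ := hZ y hy.le
      have := hpos y hy0
      have : 0 ≤ α + y * deriv L y / L y := by linarith
      positivity
  have hZ0 := (hZ Z le_rfl).2
  exact ⟨L Z * Z ^ α, mul_pos (hpos Z hZ0) (rpow_pos_of_pos hZ0 α),
    eventually_atTop.2 ⟨Z, fun y hy => hmono self_mem_Ici hy hy⟩⟩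

theorem eventually_log_add_one_le_mul_rpow {c α : ℝ} (hc : 0 < c) (hα : 0 < α) :
    ∀ᶠ y in atTop, log y + 1 ≤ c * y ^ α := by
  have hlittle : (fun y => log y + 1) =o[atTop] fun y => y ^ α := by
    refine (isLittleO_log_rpow_atTop hα).add ((Asymptotics.isLittleO_one_left_iff ℝ).2 ?_)
    exact tendsto_norm_atTop_atTop.comp (tendsto_rpow_atTop hα)
  filter_upwards [hlittle.bound hc, eventually_gt_atTop 0] with y hy hy0
  rw [norm_of_nonneg (rpow_nonneg hy0.le α)] at hy
  exact (le_abs_self _).trans hy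

theorem hasDerivAt_sub_log_deriv {L h ψ : ℝ → ℝ} {ρ y : ℝ}
    (hLpos : ∀ y > 0, 0 < L y) (hLdiff : ∀ y > 0, DifferentiableAt ℝ L y)
    (hLdiff2 : ∀ y > 0, DifferentiableAt ℝ (deriv L) y)
    (hh : ∀ y > 0, h y = L y * y ^ ρ) (hh' : ∀ y > 0, 0 < deriv h y)
    (hψ : ∀ y > 0, ψ y = h y - log (deriv h y)) (hy : 0 < y) :
    HasDerivAt ψ (deriv h y - ((ρ + y * deriv L y / L y - 1) / y +
      deriv (fun y => y * deriv L y / L y) y / (ρ + y * deriv L y / L y))) y := by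
  set s := fun y => y * deriv L y / L y
  have hderiv : ∀ z > 0, deriv h z = L z * z ^ (ρ - 1) * (ρ + s z) := fun z hz =>
    (hasDerivAt_of_eq_mul_rpow hh hz (hLdiff z hz) (hLpos z hz).ne').deriv
  have hρs : ∀ z > 0, 0 < ρ + s z := fun z hz => by
    have := hh' z hz
    rw [hderiv z hz] at this
    exact pos_of_mul_pos_right this (mul_pos (hLpos z hz) (rpow_pos_of_pos hz _)).le
  have hloc : (fun z => h z - (log (L z) + (ρ - 1) * log z + log (ρ + s z))) =ᶠ[𝓝 y] ψ := by
    filter_upwards [Ioi_mem_nhds hy] with z hz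
    rw [hψ z hz, hderiv z hz, log_mul (mul_pos (hLpos z hz) (rpow_pos_of_pos hz _)).ne'
      (hρs z hz).ne', log_mul (hLpos z hz).ne' (rpow_pos_of_pos hz _).ne', log_rpow hz]
  have hH : HasDerivAt h (deriv h y) y :=
    (hasDerivAt_of_eq_mul_rpow hh hy (hLdiff y hy) (hLpos y hy).ne').differentiableAt.hasDerivAt
  have hlogL := (hLdiff y hy).hasDerivAt.log (hLpos y hy).ne'
  have hlogy := (hasDerivAt_log hy.ne').const_mul (ρ - 1)
  have hsd : DifferentiableAt ℝ s y :=
    (differentiableAt_id.mul (hLdiff2 y hy)).div (hLdiff y hy) (hLpos y hy).ne'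
  have hlogs := (hsd.hasDerivAt.const_add ρ).log (hρs y hy).ne'
  refine ((hH.sub ((hlogL.add hlogy).add hlogs)).congr_of_eventuallyEq hloc.symm).congr_deriv ?_
  have hsplit : deriv L y / L y + (ρ - 1) * y⁻¹ = (ρ + y * deriv L y / L y - 1) / y := by
    field_simp [(hLpos y hy).ne']
    ring
  rw [hsplit]

theorem eventually_log_le_deriv_sub_log_deriv {L h ψ : ℝ → ℝ} {ρ : ℝ} (hρ : 1 < ρ)
    (hLpos : ∀ y > 0, 0 < L y) (hLdiff : ∀ y > 0, DifferentiableAt ℝ L y)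
    (hLdiff2 : ∀ y > 0, DifferentiableAt ℝ (deriv L) y)
    (hL1 : Tendsto (fun y => y * deriv L y / L y) atTop (𝓝 0))
    (hL2 : Tendsto (deriv fun y => y * deriv L y / L y) atTop (𝓝 0))
    (hh : ∀ y > 0, h y = L y * y ^ ρ) (hh' : ∀ y > 0, 0 < deriv h y)
    (hψ : ∀ y > 0, ψ y = h y - log (deriv h y)) :
    ∀ᶠ y in atTop, log y ≤ deriv ψ y := by
  have hcorr : Tendsto (fun y => (ρ + y * deriv L y / L y - 1) / y +
      deriv (fun y => y * deriv L y / L y) y / (ρ + y * deriv L y / L y)) atTop (𝓝 0) := by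
    have hfirst := ((hL1.const_add ρ).sub_const 1).div_atTop tendsto_id
    have hsecond := hL2.div (hL1.const_add ρ) (by linarith)
    simpa using hfirst.add hsecond
  obtain ⟨c, hc, hcL⟩ := exists_pos_le_mul_rpow hLpos hLdiff hL1 (α := (ρ - 1) / 2) (by linarith)
  filter_upwards [hcL, eventually_log_add_one_le_mul_rpow hc (α := (ρ - 1) / 2) (by linarith),
    hcorr.eventually (ge_mem_nhds one_pos), hL1.eventually (lt_mem_nhds (by linarith : 1 - ρ < 0)),
    eventually_gt_atTop 0] with y hcy hlogy hcorry hsy hy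
  rw [(hasDerivAt_sub_log_deriv hLpos hLdiff hLdiff2 hh hh' hψ hy).deriv,
    (hasDerivAt_of_eq_mul_rpow hh hy (hLdiff y hy) (hLpos y hy).ne').deriv]
  have hsplit : y ^ (ρ - 1) = y ^ ((ρ - 1) / 2) * y ^ ((ρ - 1) / 2) := by
    rw [← rpow_add hy]; ring_nf
  calc log y ≤ c * y ^ ((ρ - 1) / 2) - 1 := by linarith
    _ ≤ L y * y ^ (ρ - 1) * 1 - 1 := by
        rw [hsplit, ← mul_assoc, mul_one]; gcongr
    _ ≤ L y * y ^ (ρ - 1) * (ρ + y * deriv L y / L y) - 1 := by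
        have := mul_pos (hLpos y hy) (rpow_pos_of_pos hy (ρ - 1))
        gcongr; linarith
    _ ≤ _ := by gcongr

theorem tendsto_atTop_of_monotoneOn_comp {α : Type*} {l : Filter α} {h : ℝ → ℝ} {x : α → ℝ}
    (hh : MonotoneOn h (Ioi 0)) (hx : ∀ᶠ n in l, 0 < x n) (hhx : Tendsto (h ∘ x) l atTop) :
    Tendsto x l atTop := by
  refine tendsto_atTop.2 fun K => ?_
  filter_upwards [hx, hhx.eventually_gt_atTop (h (max K 1))] with n hxn hhxn
  by_contra! hlt
  exact hhxn.not_ge (hh hxn (one_pos.trans_le (le_max_right K 1))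
    (hlt.le.trans (le_max_left K 1)))

theorem Set.OrdConnected.deriv_le_of_deriv_ne {f : ℝ → ℝ} {s : Set ℝ} {x₀ Q : ℝ}
    (hs : s.OrdConnected) (hf : ∀ x ∈ s, DifferentiableAt ℝ f x) (hx₀ : x₀ ∈ s)
    (hlt : deriv f x₀ < Q) (hne : ∀ x ∈ s, deriv f x ≠ Q) : ∀ x ∈ s, deriv f x ≤ Q := by
  intro x hx
  by_contra! hgt
  obtain ⟨z, hz, hzQ⟩ := (hs.image_deriv hf).out (mem_image_of_mem _ hx₀) (mem_image_of_mem _ hx)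
    ⟨hlt.le, hgt.le⟩
  exact hne z hz hzQ

theorem eventually_deriv_le_of_le_unique_crit {ψ ystar : ℝ → ℝ} {b Q : ℕ → ℝ}
    (hψ : ∀ y > 0, DifferentiableAt ℝ ψ y)
    (huniq : ∀ᶠ q in atTop, ∀ y > 0, deriv ψ y = q → y = ystar q)
    (hb : Tendsto b atTop atTop) (hQ : Tendsto Q atTop atTop)
    (hcrit : ∀ᶠ n in atTop, b n ≤ ystar (Q n)) :
    ∀ᶠ n in atTop, ∀ y ∈ Ioo 0 (b n), deriv ψ y ≤ Q n := by
  filter_upwards [hQ.eventually huniq, hcrit, hb.eventually_gt_atTop 1,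
    hQ.eventually_gt_atTop (deriv ψ 1)] with n huniqn hcritn hb1 hQ1
  refine ordConnected_Ioo.deriv_le_of_deriv_ne (fun y hy => hψ y hy.1) ⟨one_pos, hb1⟩ hQ1 ?_
  intro y hy hyQ
  have := huniqn y hy.1 hyQ
  linarith [hy.2]

theorem integral_exp_bounds_of_monotoneOn {g : ℝ → ℝ} {a b : ℝ} (ha : 0 < a) (hab : a < b)
    (hg : MonotoneOn g (Ioc 0 b)) (hgc : ContinuousOn g (Ioc 0 b)) :
    (b - a) * exp (g a) ≤ ∫ y in 0..b, exp (g y) ∧ ∫ y in 0..b, exp (g y) ≤ b * exp (g b) := by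
  have hb : 0 < b := ha.trans hab
  have hbmem : b ∈ Ioc 0 b := ⟨hb, le_rfl⟩
  have hsub : Ioc a b ⊆ Ioc 0 b := Ioc_subset_Ioc_left ha.le
  have hint : IntegrableOn (fun y => exp (g y)) (Ioc 0 b) := by
    refine IntegrableOn.of_bound measure_Ioc_lt_top
      ((continuous_exp.comp_continuousOn hgc).aestronglyMeasurable measurableSet_Ioc) (exp (g b))
      ((ae_restrict_mem measurableSet_Ioc).mono fun y hy => ?_)
    rw [norm_of_nonneg (exp_pos _).le]
    exact exp_le_exp.2 (hg hy hbmem hy.2)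
  rw [integral_of_le hb.le]
  constructor
  · calc (b - a) * exp (g a) = ∫ _ in Ioc a b, exp (g a) := by simp [hab.le]
      _ ≤ ∫ y in Ioc a b, exp (g y) :=
          setIntegral_mono_on (integrableOn_const measure_Ioc_lt_top.ne) (hint.mono_set hsub)
            measurableSet_Ioc fun y hy => exp_le_exp.2 (hg ⟨ha, hab.le⟩ (hsub hy) hy.1.le)
      _ ≤ ∫ y in Ioc 0 b, exp (g y) :=
          setIntegral_mono_set hint (ae_of_all _ fun y => (exp_pos _).le) hsub.eventuallyLE
  · calc ∫ y in Ioc 0 b, exp (g y) ≤ ∫ _ in Ioc 0 b, exp (g b) :=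
          setIntegral_mono_on hint (integrableOn_const measure_Ioc_lt_top.ne) measurableSet_Ioc
            fun y hy => exp_le_exp.2 (hg hy hbmem hy.2)
      _ = b * exp (g b) := by simp [hb.le]

theorem monotoneOn_mul_sub_of_deriv_le {ψ : ℝ → ℝ} {Q b : ℝ}
    (hψ : ∀ y > 0, DifferentiableAt ℝ ψ y) (hψQ : ∀ y ∈ Ioo 0 b, deriv ψ y ≤ Q) :
    MonotoneOn (fun y => Q * y - ψ y) (Ioc 0 b) := by
  have hd : ∀ y > 0, HasDerivAt (fun y => Q * y - ψ y) (Q - deriv ψ y) y := fun y hy =>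
    (((hasDerivAt_id y).const_mul Q).sub (hψ y hy).hasDerivAt).congr_deriv (by rw [mul_one])
  refine monotoneOn_of_hasDerivWithinAt_nonneg (convex_Ioc 0 b) (f' := fun y => Q - deriv ψ y)
    (fun y hy => (hd y hy.1).continuousAt.continuousWithinAt) (fun y hy => ?_) fun y hy => ?_
  all_goals rw [interior_Ioc] at hy
  · exact (hd y hy.1).hasDerivWithinAt
  · exact sub_nonneg.2 (hψQ y hy)

theorem abs_log_integral_exp_sub_le {ψ : ℝ → ℝ} {Y Q b : ℝ}
    (hψ : ∀ y > 0, DifferentiableAt ℝ ψ y) (hY : 0 < Y) (hψY : ∀ y ≥ Y, 0 ≤ deriv ψ y)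
    (hQ : 1 ≤ Q) (hb : Y + 1 ≤ b) (hψQ : ∀ y ∈ Ioo 0 b, deriv ψ y ≤ Q) (hlogb : log b ≤ Q) :
    |log (∫ y in 0..b, exp (Q * y - ψ y)) - (Q * b - ψ b)| ≤ Q := by
  have hQ0 : 0 < Q := one_pos.trans_le hQ
  have hQinv : Q⁻¹ ≤ 1 := inv_le_one_of_one_le₀ hQ
  have hψmono : MonotoneOn ψ (Ici Y) := monotoneOn_of_deriv_nonneg (convex_Ici Y)
    (fun y hy => (hψ y (hY.trans_le hy)).continuousAt.continuousWithinAt)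
    (fun y hy => (hψ y (hY.trans_le (interior_subset hy))).differentiableWithinAt)
    fun y hy => hψY y (interior_subset hy)
  have hQinv0 : 0 < Q⁻¹ := inv_pos.2 hQ0
  have ha : Y ≤ b - Q⁻¹ := by linarith
  have hψa : ψ (b - Q⁻¹) ≤ ψ b := hψmono ha (by simp only [mem_Ici]; linarith) (by linarith)
  obtain ⟨hlow, hup⟩ := integral_exp_bounds_of_monotoneOn (hY.trans_le ha) (by linarith)
    (monotoneOn_mul_sub_of_deriv_le hψ hψQ)
    ((continuousOn_const.mul continuousOn_id).sub
      fun y hy => (hψ y hy.1).continuousAt.continuousWithinAt)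
  have hb0 : 0 < b := by linarith
  have hI := (mul_pos hQinv0 (exp_pos _)).trans_le (by simpa using hlow)
  have hlogQ := log_le_sub_one_of_pos hQ0
  have hlower := log_le_log (mul_pos hQinv0 (exp_pos _)) (by simpa using hlow)
  have hupper := log_le_log hI hup
  rw [log_mul hQinv0.ne' (exp_pos _).ne', log_exp, log_inv, mul_sub, mul_inv_cancel₀ hQ0.ne']
    at hlower
  rw [log_mul hb0.ne' (exp_pos _).ne', log_exp] at hupper
  rw [abs_le]
  constructor <;> linarith

theorem tendsto_log_integral_exp_div {ψ : ℝ → ℝ} {b Q : ℕ → ℝ}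
    (hψ : ∀ y > 0, DifferentiableAt ℝ ψ y) (hgrow : ∀ᶠ y in atTop, log y ≤ deriv ψ y)
    (hb : Tendsto b atTop atTop) (hQ : Tendsto Q atTop atTop)
    (hψQ : ∀ᶠ n in atTop, ∀ y ∈ Ioo 0 (b n), deriv ψ y ≤ Q n) :
    Tendsto (fun n => log (∫ y in 0..b n, exp (Q n * y - ψ y)) / (Q n * b n - ψ (b n)))
      atTop (𝓝 1) := by
  obtain ⟨Y, hY⟩ := eventually_atTop.1 (hgrow.and (eventually_ge_atTop 1))
  have hY1 : 1 ≤ Y := (hY Y le_rfl).2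
  have hψY : ∀ y ≥ Y, 0 ≤ deriv ψ y := fun y hy => (log_nonneg (hY y hy).2).trans (hY y hy).1
  have hlogb : ∀ᶠ n in atTop, log (b n) ≤ Q n := by
    filter_upwards [hψQ, hb.eventually_gt_atTop Y] with n hn hbn
    refine le_of_tendsto ((continuousAt_log (by linarith)).tendsto.mono_left nhdsWithin_le_nhds)
      (eventually_of_mem (Ioo_mem_nhdsLT hbn) fun y hy => ?_)
    exact (hY y hy.1.le).1.trans (hn y ⟨by linarith [hy.1], hy.2⟩)
  have hDQ : Tendsto (fun n => (Q n * b n - ψ (b n)) / Q n) atTop atTop := by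
    refine tendsto_atTop.2 fun M => ?_
    have hy : 0 < max M 0 + 1 := by positivity
    filter_upwards [hψQ, hb.eventually_ge_atTop (max M 0 + 1),
      hQ.eventually_ge_atTop (max (ψ (max M 0 + 1)) 1)] with n hn hbn hQn
    have hQn0 : 0 < Q n := one_pos.trans_le (le_max_right _ _ |>.trans hQn)
    have hg := monotoneOn_mul_sub_of_deriv_le hψ hn ⟨hy, hbn⟩ ⟨hy.trans_le hbn, le_rfl⟩ hbn
    rw [le_div_iff₀ hQn0]
    nlinarith [le_max_left (ψ (max M 0 + 1)) 1, le_max_left M 0]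
  have hpos : ∀ᶠ n in atTop, 0 < Q n * b n - ψ (b n) := by
    filter_upwards [hDQ.eventually_gt_atTop 0, hQ.eventually_gt_atTop 0] with n hDQn hQn
    exact (div_pos_iff_of_pos_right hQn).1 hDQn
  have hsmall : Tendsto (fun n => (log (∫ y in 0..b n, exp (Q n * y - ψ y)) -
      (Q n * b n - ψ (b n))) / (Q n * b n - ψ (b n))) atTop (𝓝 0) := by
    refine squeeze_zero_norm' ?_ hDQ.inv_tendsto_atTop
    filter_upwards [hpos, hψQ, hlogb, hb.eventually_ge_atTop (Y + 1),
      hQ.eventually_ge_atTop 1] with n hD hn hlb hbn hQn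
    rw [Pi.inv_apply, inv_div, norm_div, norm_of_nonneg hD.le, Real.norm_eq_abs]
    exact div_le_div_of_nonneg_right
      (abs_log_integral_exp_sub_le hψ (by linarith) hψY hQn hbn hn hlb) hD.le
  have hlim := hsmall.const_add 1
  rw [add_zero] at hlim
  refine hlim.congr' ?_
  filter_upwards [hpos] with n hD
  field_simp
  ring

theorem stmt7_general (ρ : ℝ) (hρ : 1 < ρ) (L : ℝ → ℝ)
    (hLpos : ∀ y > (0:ℝ), 0 < L y)
    (hLdiff : ∀ y > (0:ℝ), DifferentiableAt ℝ L y)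
    (hLdiff2 : ∀ y > (0:ℝ), DifferentiableAt ℝ (deriv L) y)
    (hL1 : Tendsto (fun y => y * deriv L y / L y) atTop (nhds 0))
    (hL2 : Tendsto (deriv fun y => y * deriv L y / L y) atTop (nhds 0))
    (h : ℝ → ℝ) (hh : ∀ y > (0:ℝ), h y = L y * y ^ ρ)
    (hmono : StrictMonoOn h (Set.Ioi 0))
    (hh' : ∀ y > (0:ℝ), 0 < deriv h y)
    (ydag : ℕ → ℝ) (hydag_pos : ∀ n ≥ 2, 0 < ydag n)
    (hydag : ∀ n ≥ 2, h (ydag n) = Real.log n)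
    (ψ : ℝ → ℝ) (hψ : ∀ y > (0:ℝ), ψ y = h y - Real.log (deriv h y))
    (ystar : ℝ → ℝ)
    (hystar_uniq : ∀ᶠ q in atTop, ∀ y > (0:ℝ), deriv ψ y = q → y = ystar q)
    (MT : ℕ → ℝ → ℝ)
    (hMT : ∀ n q, MT n q = ∫ y in (0:ℝ)..(ydag n),
      deriv h y * Real.exp (q * y - h y))
    (q : ℕ → ℝ) (hqtop : Tendsto q atTop atTop)
    (hsuper : ∀ᶠ n in atTop, ydag n ≤ ystar (q n)) :
    Tendsto
      (fun n => Real.log (MT n (q n)) /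
        (q n * ydag n - h (ydag n) + Real.log (deriv h (ydag n))))
      atTop (nhds 1) := by
  have hψdiff : ∀ y > 0, DifferentiableAt ℝ ψ y := fun y hy =>
    (hasDerivAt_sub_log_deriv hLpos hLdiff hLdiff2 hh hh' hψ hy).differentiableAt
  have hydag_top : Tendsto ydag atTop atTop :=
    tendsto_atTop_of_monotoneOn_comp hmono.monotoneOn (eventually_atTop.2 ⟨2, hydag_pos⟩)
      ((tendsto_log_atTop.comp tendsto_natCast_atTop_atTop).congr'
        (eventually_atTop.2 ⟨2, fun n hn => (hydag n hn).symm⟩))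
  refine (tendsto_log_integral_exp_div hψdiff
    (eventually_log_le_deriv_sub_log_deriv hρ hLpos hLdiff hLdiff2 hL1 hL2 hh hh' hψ)
    hydag_top hqtop
    (eventually_deriv_le_of_le_unique_crit hψdiff hystar_uniq hydag_top hqtop hsuper)).congr' ?_
  filter_upwards [eventually_ge_atTop 2] with n hn
  have hb := hydag_pos n hn
  rw [hMT, hψ _ hb]
  congr 1
  · refine congrArg log (integral_congr_ae (ae_of_all _ fun y hy => ?_))
    have hy : 0 < y := ((uIoc_of_le hb.le) ▸ hy).1
    rw [hψ y hy, show q n * y - (h y - log (deriv h y)) = log (deriv h y) + (q n * y - h y) by ring,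
      exp_add, exp_log (hh' y hy)]
  · ring

/-- In the supercritical regime `y*(q(n)) ≥ y†(n)`, the log of the
truncated moment is asymptotically `q y†(n) - h(y†(n)) + ln h'(y†(n))`, i.e.
linear in `q`. -/
theorem stmt7 (ρ : ℝ) (hρ : 1 < ρ) (L : ℝ → ℝ)
    (hLpos : ∀ y > (0:ℝ), 0 < L y)
    (hLdiff : ∀ y > (0:ℝ), DifferentiableAt ℝ L y)
    (hLdiff2 : ∀ y > (0:ℝ), DifferentiableAt ℝ (deriv L) y)
    (hSV : ∀ t > (0:ℝ), Tendsto (fun y => L (t * y) / L y) atTop (nhds 1))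
    (hL1 : Tendsto (fun y => y * deriv L y / L y) atTop (nhds 0))
    (hL2 : Tendsto (deriv fun y => y * deriv L y / L y) atTop (nhds 0))
    (h : ℝ → ℝ) (hh : ∀ y > (0:ℝ), h y = L y * y ^ ρ)
    (hmono : StrictMonoOn h (Set.Ioi 0)) (htop : Tendsto h atTop atTop)
    (hh' : ∀ y > (0:ℝ), 0 < deriv h y)
    (ydag : ℕ → ℝ) (hydag_pos : ∀ n ≥ 2, 0 < ydag n)
    (hydag : ∀ n ≥ 2, h (ydag n) = Real.log n)
    (ψ : ℝ → ℝ) (hψ : ∀ y > (0:ℝ), ψ y = h y - Real.log (deriv h y))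
    (ystar : ℝ → ℝ) (hystar_pos : ∀ᶠ q in atTop, 0 < ystar q)
    (hystar : ∀ᶠ q in atTop, deriv ψ (ystar q) = q)
    (hystar_uniq : ∀ᶠ q in atTop, ∀ y > (0:ℝ), deriv ψ y = q → y = ystar q)
    (MT : ℕ → ℝ → ℝ)
    (hMT : ∀ n q, MT n q = ∫ y in (0:ℝ)..(ydag n),
      deriv h y * Real.exp (q * y - h y))
    (q : ℕ → ℝ) (hqtop : Tendsto q atTop atTop)
    (hsuper : ∀ᶠ n in atTop, ydag n ≤ ystar (q n)) :
    Tendsto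
      (fun n => Real.log (MT n (q n)) /
        (q n * ydag n - h (ydag n) + Real.log (deriv h (ydag n))))
      atTop (nhds 1) :=
  stmt7_general ρ hρ L hLpos hLdiff hLdiff2 hL1 hL2 h hh hmono hh' ydag hydag_pos hydag ψ hψ ystar
    hystar_uniq MT hMT q hqtop hsuper
end

section
/- Let k ≥ 2, let G_k have Lebesgue density g ↦ exp( −e^{−g} − k·g ) / (k−1)!, and let Δ_1, …, Δ_{k−1} be i.i.d. standard exponential random variables independent of G_k. For β = (β_1, …, β_{k−1}) ∈ ℝ^{k−1} set Ω(β) = G_k + Σ_{i=1}^{k−1} β_i·Δ_i. Then among all β with E[Ω(β)] = 0, the second moment E[Ω(β)²] is minimized by the constant choice β_1 = … = β_{k−1} = ( Σ_{j=1}^{k−1} 1/j − γ ) / (k−1), where γ is the Euler–Mascheroni constant. (This is Proposition 1: the minimum-variance unbiased linear combination of the limiting order statistics.) -/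
/-! The substitution `t = e^{-g}` turns the density of `G_k` into the Gamma(`k`) density, so
`G_k` has a finite second moment and `E[G_k] = -Γ'(k)/Γ(k) = γ - H_{k-1}`. As `G_k` and the
`Δ_i` are independent with `Var Δ_i = 1`, every centred `Ω(β)` has
`E[Ω(β)²] = Var Ω(β) = Var G_k + ∑ β_i²`, while centring fixes `∑ β_i = H_{k-1} - γ`. Among
vectors with a prescribed sum, the constant one minimises `∑ β_i²`. -/

open Filter Real MeasureTheory ProbabilityTheory Set
open scoped Nat

namespace Real

theorem hasDerivAt_Gamma_integral {s : ℝ} (hs : 0 < s) :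
    HasDerivAt Gamma (∫ t in Ioi 0, t ^ (s - 1) * (log t * exp (-t))) s := by
  have hs' : 0 < (s : ℂ).re := by simpa using hs
  have hGamma : Complex.Gamma =ᶠ[nhds (s : ℂ)] Complex.GammaIntegral := by
    filter_upwards [(isOpen_lt continuous_const Complex.continuous_re).mem_nhds hs']
      with z hz using Complex.Gamma_eq_integral hz
  have hint : (∫ t in Ioi (0 : ℝ), (t : ℂ) ^ ((s : ℂ) - 1) * ((log t : ℂ) * (exp (-t) : ℂ)))
      = ((∫ t in Ioi 0, t ^ (s - 1) * (log t * exp (-t)) : ℝ) : ℂ) := by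
    rw [← integral_complex_ofReal]
    refine setIntegral_congr_fun measurableSet_Ioi fun t ht => ?_
    rw [← Complex.ofReal_one, ← Complex.ofReal_sub, ← Complex.ofReal_cpow (le_of_lt ht)]
    push_cast
    ring
  have := ((Complex.hasDerivAt_GammaIntegral hs').congr_of_eventuallyEq hGamma).real_of_complex
  rwa [hint, Complex.ofReal_re] at this

end Real

lemma image_exp_neg_univ : (fun g : ℝ => exp (-g)) '' univ = Ioi 0 := by
  rw [image_univ, ← Real.range_exp]
  exact (Equiv.neg ℝ).surjective.range_comp exp

lemma hasDerivWithinAt_exp_neg (x : ℝ) :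
    HasDerivWithinAt (fun g => exp (-g)) (-exp (-x)) univ x := by
  simpa using ((hasDerivAt_neg x).exp).hasDerivWithinAt (s := univ)

lemma injOn_exp_neg : InjOn (fun g : ℝ => exp (-g)) univ :=
  fun _ _ _ _ h => neg_injective (exp_injective h)

theorem integrable_exp_neg_mul_comp_exp_neg_iff (F : ℝ → ℝ) :
    Integrable (fun g => exp (-g) * F (exp (-g))) ↔ IntegrableOn F (Ioi 0) := by
  rw [← image_exp_neg_univ, integrableOn_image_iff_integrableOn_abs_deriv_smul MeasurableSet.univ
    (fun x _ => hasDerivWithinAt_exp_neg x) injOn_exp_neg, integrableOn_univ]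
  simp [abs_of_pos (exp_pos _)]

theorem integral_exp_neg_mul_comp_exp_neg (F : ℝ → ℝ) :
    ∫ g, exp (-g) * F (exp (-g)) = ∫ t in Ioi 0, F t := by
  rw [← image_exp_neg_univ, integral_image_eq_integral_abs_deriv_smul MeasurableSet.univ
    (fun x _ => hasDerivWithinAt_exp_neg x) injOn_exp_neg, setIntegral_univ]
  simp [abs_of_pos (exp_pos _)]

lemma exp_neg_mul_gammaIntegrand_exp_neg (k g : ℝ) :
    exp (-g) * (exp (-exp (-g)) * exp (-g) ^ (k - 1)) = exp (-exp (-g) - k * g) := by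
  rw [← exp_mul, ← exp_add, ← exp_add]
  ring_nf

theorem integrable_exp_neg_exp_neg_sub_mul {k : ℝ} (hk : 0 < k) :
    Integrable fun g => exp (-exp (-g) - k * g) := by
  simpa only [exp_neg_mul_gammaIntegrand_exp_neg] using
    (integrable_exp_neg_mul_comp_exp_neg_iff _).2 (GammaIntegral_convergent hk)

theorem integral_mul_exp_neg_exp_neg_sub_mul {k : ℝ} (hk : 0 < k) :
    ∫ g, g * exp (-exp (-g) - k * g) = -deriv Gamma k := by
  have h := integral_exp_neg_mul_comp_exp_neg fun t => -(t ^ (k - 1) * (log t * exp (-t)))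
  simp only [log_exp, integral_neg] at h
  rw [(Real.hasDerivAt_Gamma_integral hk).deriv, ← h]
  congr 1 with g
  rw [← exp_neg_mul_gammaIntegrand_exp_neg]
  ring

lemma sq_le_four_mul_exp_add_exp_neg (x : ℝ) : x ^ 2 ≤ 4 * (exp x + exp (-x)) := by
  have hhalf : |x| / 2 ≤ exp (|x| / 2) := by linarith [add_one_le_exp (|x| / 2)]
  have habs : exp |x| ≤ exp x + exp (-x) := by
    rcases abs_cases x with ⟨h, _⟩ | ⟨h, _⟩ <;> rw [h] <;> linarith [exp_pos x, exp_pos (-x)]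
  calc x ^ 2 = 4 * (|x| / 2) ^ 2 := by rw [div_pow, sq_abs]; ring
    _ ≤ 4 * exp (|x| / 2) ^ 2 := by gcongr
    _ = 4 * exp |x| := by rw [← exp_nat_mul]; ring_nf
    _ ≤ 4 * (exp x + exp (-x)) := by gcongr

theorem integrable_sq_mul_exp_neg_exp_neg_sub_mul {k : ℝ} (hk : 0 < k) :
    Integrable fun g => g ^ 2 * exp (-exp (-g) - k * g) := by
  have hmajorant : Integrable fun g =>
      16 / k ^ 2 * (exp (-exp (-g) - k / 2 * g) + exp (-exp (-g) - 3 * k / 2 * g)) :=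
    ((integrable_exp_neg_exp_neg_sub_mul (by positivity)).add
      (integrable_exp_neg_exp_neg_sub_mul (by positivity))).const_mul _
  refine hmajorant.mono' (by fun_prop) (Eventually.of_forall fun g => ?_)
  have hbound := sq_le_four_mul_exp_add_exp_neg (k * g / 2)
  rw [norm_of_nonneg (by positivity)]
  calc g ^ 2 * exp (-exp (-g) - k * g)
      = 4 / k ^ 2 * (k * g / 2) ^ 2 * exp (-exp (-g) - k * g) := by field_simp; ring
    _ ≤ 4 / k ^ 2 * (4 * (exp (k * g / 2) + exp (-(k * g / 2)))) * exp (-exp (-g) - k * g) := by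
      gcongr
    _ = 16 / k ^ 2 * (exp (k * g / 2) * exp (-exp (-g) - k * g)
          + exp (-(k * g / 2)) * exp (-exp (-g) - k * g)) := by ring
    _ = _ := by rw [← exp_add, ← exp_add]; ring_nf

section WithDensity

variable {d : ℝ → ℝ}

lemma integrable_withDensity_ofReal_iff (hd : Measurable d) (hd₀ : ∀ x, 0 ≤ d x) (f : ℝ → ℝ) :
    Integrable f (volume.withDensity fun x => ENNReal.ofReal (d x)) ↔
      Integrable fun x => d x * f x := by
  rw [integrable_withDensity_iff_integrable_smul' hd.ennreal_ofReal
    (Eventually.of_forall fun _ => ENNReal.ofReal_lt_top)]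
  simp only [ENNReal.toReal_ofReal (hd₀ _), smul_eq_mul]

lemma integral_withDensity_ofReal (hd : Measurable d) (hd₀ : ∀ x, 0 ≤ d x) (f : ℝ → ℝ) :
    ∫ x, f x ∂volume.withDensity (fun x => ENNReal.ofReal (d x)) = ∫ x, d x * f x := by
  rw [integral_withDensity_eq_integral_toReal_smul hd.ennreal_ofReal
    (Eventually.of_forall fun _ => ENNReal.ofReal_lt_top)]
  simp only [ENNReal.toReal_ofReal (hd₀ _), smul_eq_mul]

end WithDensity

lemma exponentialPDFReal_one_mul_pow (j : ℕ) :
    (fun x => exponentialPDFReal 1 x * x ^ j) = (Ici 0).indicator fun x => exp (-x) * x ^ j := by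
  ext x
  by_cases hx : 0 ≤ x <;> simp [exponentialPDFReal, gammaPDFReal, hx]

lemma integrableOn_exp_neg_mul_pow (j : ℕ) :
    IntegrableOn (fun x => exp (-x) * x ^ j) (Ioi 0) := by
  simpa using GammaIntegral_convergent (s := j + 1) (by positivity)

lemma integral_exp_neg_mul_pow (j : ℕ) : ∫ x in Ioi 0, exp (-x) * x ^ j = j ! := by
  simpa [Gamma_nat_eq_factorial] using (Gamma_eq_integral (s := j + 1) (by positivity)).symm

lemma expMeasure_eq_withDensity (r : ℝ) :
    expMeasure r = volume.withDensity fun x => ENNReal.ofReal (exponentialPDFReal r x) := rfl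

theorem integrable_pow_expMeasure_one (j : ℕ) : Integrable (fun x => x ^ j) (expMeasure 1) := by
  rw [expMeasure_eq_withDensity,
    integrable_withDensity_ofReal_iff (measurable_exponentialPDFReal 1)
      (exponentialPDFReal_nonneg one_pos), exponentialPDFReal_one_mul_pow,
    integrable_indicator_iff measurableSet_Ici, integrableOn_Ici_iff_integrableOn_Ioi]
  exact integrableOn_exp_neg_mul_pow j

theorem integral_pow_expMeasure_one (j : ℕ) : ∫ x, x ^ j ∂expMeasure 1 = j ! := by
  rw [expMeasure_eq_withDensity,
    integral_withDensity_ofReal (measurable_exponentialPDFReal 1)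
      (exponentialPDFReal_nonneg one_pos), exponentialPDFReal_one_mul_pow,
    integral_indicator measurableSet_Ici, integral_Ici_eq_integral_Ioi]
  exact integral_exp_neg_mul_pow j

lemma memLp_id_expMeasure_one : MemLp id 2 (expMeasure 1) :=
  (memLp_two_iff_integrable_sq aestronglyMeasurable_id).2 (integrable_pow_expMeasure_one 2)

lemma integral_id_expMeasure_one : ∫ x, x ∂expMeasure 1 = 1 := by
  simpa using integral_pow_expMeasure_one 1

lemma variance_id_expMeasure_one : Var[id; expMeasure 1] = 1 := by
  have := isProbabilityMeasure_expMeasure one_pos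
  rw [variance_eq_sub memLp_id_expMeasure_one]
  simp only [id, Pi.pow_apply, integral_pow_expMeasure_one, integral_id_expMeasure_one]
  norm_num

section GumbelOrder

/-- The law of `G_k` for real `k > 0`; at `k = m + 1` the normalizing constant `Γ k` is `m !`. -/
noncomputable def gumbelOrderPDF (k g : ℝ) : ℝ := exp (-exp (-g) - k * g) / Gamma k

noncomputable def gumbelOrderMeasure (k : ℝ) : Measure ℝ :=
  volume.withDensity fun g => ENNReal.ofReal (gumbelOrderPDF k g)

variable {k : ℝ}

lemma measurable_gumbelOrderPDF (k : ℝ) : Measurable (gumbelOrderPDF k) := by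
  unfold gumbelOrderPDF; fun_prop

lemma gumbelOrderPDF_nonneg (hk : 0 < k) (g : ℝ) : 0 ≤ gumbelOrderPDF k g :=
  div_nonneg (exp_pos _).le (Gamma_pos_of_pos hk).le

theorem memLp_id_gumbelOrderMeasure (hk : 0 < k) : MemLp id 2 (gumbelOrderMeasure k) := by
  rw [memLp_two_iff_integrable_sq aestronglyMeasurable_id, gumbelOrderMeasure,
    integrable_withDensity_ofReal_iff (measurable_gumbelOrderPDF k) (gumbelOrderPDF_nonneg hk)]
  refine ((integrable_sq_mul_exp_neg_exp_neg_sub_mul hk).div_const (Gamma k)).congr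
    (Eventually.of_forall fun g => ?_)
  simp only [gumbelOrderPDF, id]
  ring

theorem integral_id_gumbelOrderMeasure (hk : 0 < k) :
    ∫ x, x ∂gumbelOrderMeasure k = -deriv Gamma k / Gamma k := by
  rw [gumbelOrderMeasure,
    integral_withDensity_ofReal (measurable_gumbelOrderPDF k) (gumbelOrderPDF_nonneg hk),
    ← integral_mul_exp_neg_exp_neg_sub_mul hk, ← integral_div]
  congr 1 with g
  simp only [gumbelOrderPDF]
  ring

lemma gumbelOrderMeasure_natCast_add_one (m : ℕ) :
    gumbelOrderMeasure (m + 1) = volume.withDensity fun g =>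
      ENNReal.ofReal (exp (-exp (-g) - ((m : ℝ) + 1) * g) / m !) := by
  simp only [gumbelOrderMeasure, gumbelOrderPDF, Gamma_nat_eq_factorial]

theorem integral_id_gumbelOrderMeasure_natCast_add_one (m : ℕ) :
    ∫ x, x ∂gumbelOrderMeasure (m + 1) = eulerMascheroniConstant - harmonic m := by
  rw [integral_id_gumbelOrderMeasure (by positivity), deriv_Gamma_nat, Gamma_nat_eq_factorial]
  field_simp
  ring

end GumbelOrder

theorem Finset.sum_sq_le_sum_sq_of_sum_eq {ι : Type*} (s : Finset ι) {c β : ι → ℝ} {t : ℝ}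
    (hc : ∀ i ∈ s, c i = t) (hsum : ∑ i ∈ s, c i = ∑ i ∈ s, β i) :
    ∑ i ∈ s, c i ^ 2 ≤ ∑ i ∈ s, β i ^ 2 := by
  have hcross : ∑ i ∈ s, (β i ^ 2 - c i ^ 2 - (β i - c i) ^ 2) =
      2 * t * (∑ i ∈ s, β i - ∑ i ∈ s, c i) := by
    rw [mul_sub, Finset.mul_sum, Finset.mul_sum, ← Finset.sum_sub_distrib]
    exact Finset.sum_congr rfl fun i hi => by rw [hc i hi]; ring
  rw [hsum, sub_self, mul_zero, Finset.sum_sub_distrib, Finset.sum_sub_distrib] at hcross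
  linarith [Finset.sum_nonneg fun i (_ : i ∈ s) => sq_nonneg (β i - c i)]

lemma add_sum_mul_eq_sum_snoc {Ω : Type*} {m : ℕ} {G : Ω → ℝ} {Δ : Fin m → Ω → ℝ}
    (β : Fin m → ℝ) (ω : Ω) :
    G ω + ∑ i, β i * Δ i ω =
      ∑ j, (Fin.snoc β 1 : Fin (m + 1) → ℝ) j * (Fin.snoc Δ G : Fin (m + 1) → Ω → ℝ) j ω := by
  simp [Fin.sum_univ_castSucc, add_comm]

section Independence

variable {Ω : Type*} [MeasurableSpace Ω] {μ : Measure Ω}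

theorem variance_sum_mul_of_iIndepFun {ι : Type*} [Fintype ι] {X : ι → Ω → ℝ}
    (hX : ∀ i, MemLp (X i) 2 μ) (hind : iIndepFun X μ) (c : ι → ℝ) :
    Var[fun ω => ∑ i, c i * X i ω; μ] = ∑ i, c i ^ 2 * Var[X i; μ] := by
  have hsum := IndepFun.variance_sum (s := Finset.univ) (X := fun i ω => c i * X i ω)
    (fun i _ => (hX i).const_mul (c i))
    (fun i _ j _ hij => (hind.indepFun hij).comp (measurable_const_mul (c i))
      (measurable_const_mul (c j)))
  simp only [variance_const_mul] at hsum
  rw [← hsum]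
  congr 1 with ω
  simp

variable {m : ℕ} {G : Ω → ℝ} {Δ : Fin m → Ω → ℝ}

theorem integral_add_sum_mul (hG : Integrable G μ) (hΔ : ∀ i, Integrable (Δ i) μ)
    (β : Fin m → ℝ) : ∫ ω, G ω + ∑ i, β i * Δ i ω ∂μ = μ[G] + ∑ i, β i * μ[Δ i] := by
  rw [integral_add hG (integrable_finsetSum _ fun i _ => (hΔ i).const_mul (β i)),
    integral_finsetSum _ fun i _ => (hΔ i).const_mul (β i)]
  simp only [integral_const_mul]

theorem integral_sq_add_sum_mul [IsProbabilityMeasure μ] (hG : MemLp G 2 μ)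
    (hΔ : ∀ i, MemLp (Δ i) 2 μ) (hind : iIndepFun (Fin.snoc Δ G : Fin (m + 1) → Ω → ℝ) μ)
    (β : Fin m → ℝ) :
    ∫ ω, (G ω + ∑ i, β i * Δ i ω) ^ 2 ∂μ =
      Var[G; μ] + ∑ i, β i ^ 2 * Var[Δ i; μ] + (∫ ω, G ω + ∑ i, β i * Δ i ω ∂μ) ^ 2 := by
  have hX : ∀ j, MemLp ((Fin.snoc Δ G : Fin (m + 1) → Ω → ℝ) j) 2 μ :=
    Fin.lastCases (by simpa using hG) (fun i => by simpa using hΔ i)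
  have hmemLp : MemLp (fun ω => G ω + ∑ i, β i * Δ i ω) 2 μ :=
    hG.add (memLp_finsetSum _ fun i _ => (hΔ i).const_mul (β i))
  have hvar := variance_eq_sub hmemLp
  rw [funext (add_sum_mul_eq_sum_snoc β), variance_sum_mul_of_iIndepFun hX hind,
    ← funext (add_sum_mul_eq_sum_snoc β)] at hvar
  simp only [Fin.sum_univ_castSucc, Fin.snoc_castSucc, Fin.snoc_last, Pi.pow_apply] at hvar
  linarith

end Independence

lemma harmonic_eq_sum_range_one_div (m : ℕ) :
    (harmonic m : ℝ) = ∑ j ∈ Finset.range m, 1 / (j + 1 : ℝ) := by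
  simp [harmonic, one_div]

lemma integral_id_map {Ω : Type*} [MeasurableSpace Ω] {μ : Measure Ω} {X : Ω → ℝ}
    (hX : AEMeasurable X μ) : ∫ x, x ∂μ.map X = μ[X] :=
  integral_map hX aestronglyMeasurable_id

/-- Proposition 1: With `k = m+1 ≥ 2`, let `G_k` have density
`g ↦ exp (-e^{-g} - k g)/(k-1)!`, let `Δ_1, …, Δ_{k-1}` be i.i.d. standard
exponential independent of `G_k`, and set `Ω(β) = G_k + ∑ β_i Δ_i`. Among all
`β` with `E[Ω(β)] = 0`, the second moment `E[Ω(β)²]` is minimized by the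
constant choice `β_i = (∑_{j=1}^{k-1} 1/j - γ)/(k-1)`. -/
theorem stmt15 {Ωsp : Type*} [MeasureSpace Ωsp] (μ : Measure Ωsp)
    [IsProbabilityMeasure μ]
    (m : ℕ) (hm : 1 ≤ m)
    (G : Ωsp → ℝ) (hGmeas : Measurable G)
    (hG : Measure.map G μ = (volume : Measure ℝ).withDensity (fun g =>
      ENNReal.ofReal (Real.exp (- Real.exp (-g) - ((m : ℝ) + 1) * g) /
        (Nat.factorial m : ℝ))))
    (Δ : Fin m → Ωsp → ℝ) (hΔmeas : ∀ i, Measurable (Δ i))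
    (hΔlaw : ∀ i, Measure.map (Δ i) μ = expMeasure 1)
    (hindep : iIndepFun
      (Fin.snoc Δ G : Fin (m + 1) → Ωsp → ℝ) μ)
    (Om : (Fin m → ℝ) → Ωsp → ℝ)
    (hOm : ∀ β ω, Om β ω = G ω + ∑ i, β i * Δ i ω)
    (βstar : Fin m → ℝ)
    (hβstar : ∀ i, βstar i =
      ((∑ j ∈ Finset.range m, 1 / (j + 1 : ℝ)) -
        Real.eulerMascheroniConstant) / m) :
    (∫ ω, Om βstar ω ∂μ) = 0 ∧
      ∀ β : Fin m → ℝ, (∫ ω, Om β ω ∂μ) = 0 →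
        (∫ ω, (Om βstar ω) ^ 2 ∂μ) ≤ ∫ ω, (Om β ω) ^ 2 ∂μ := by
  rw [← gumbelOrderMeasure_natCast_add_one] at hG
  have hG2 : MemLp G 2 μ :=
    (hG ▸ memLp_id_gumbelOrderMeasure (by positivity)).comp_of_map hGmeas.aemeasurable
  have hEG : μ[G] = eulerMascheroniConstant - harmonic m := by
    rw [← integral_id_map hGmeas.aemeasurable, hG]
    exact integral_id_gumbelOrderMeasure_natCast_add_one m
  have hΔ2 (i : Fin m) : MemLp (Δ i) 2 μ :=
    (hΔlaw i ▸ memLp_id_expMeasure_one).comp_of_map (hΔmeas i).aemeasurable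
  have hEΔ (i : Fin m) : μ[Δ i] = 1 := by
    rw [← integral_id_map (hΔmeas i).aemeasurable, hΔlaw i]
    exact integral_id_expMeasure_one
  have hVΔ (i : Fin m) : Var[Δ i; μ] = 1 := by
    rw [← variance_id_map (hΔmeas i).aemeasurable, hΔlaw i, variance_id_expMeasure_one]
  have hmean (β : Fin m → ℝ) :
      ∫ ω, Om β ω ∂μ = eulerMascheroniConstant - harmonic m + ∑ i, β i := by
    simp_rw [hOm, integral_add_sum_mul (hG2.integrable one_le_two)
      (fun i => (hΔ2 i).integrable one_le_two), hEG, hEΔ, mul_one]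
  have hsecond (β : Fin m → ℝ) :
      ∫ ω, Om β ω ^ 2 ∂μ = Var[G; μ] + ∑ i, β i ^ 2 + (∫ ω, Om β ω ∂μ) ^ 2 := by
    simp_rw [hOm, integral_sq_add_sum_mul hG2 hΔ2 hindep, hVΔ, mul_one]
  have hβstar' (i : Fin m) : βstar i = (harmonic m - eulerMascheroniConstant) / m := by
    rw [hβstar, harmonic_eq_sum_range_one_div]
  have hsum_βstar : ∑ i, βstar i = harmonic m - eulerMascheroniConstant := by
    have hm₀ : (m : ℝ) ≠ 0 := Nat.cast_ne_zero.2 (by omega)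
    simp only [hβstar', Finset.sum_const, Finset.card_univ, Fintype.card_fin, nsmul_eq_mul]
    field_simp
  refine ⟨by rw [hmean, hsum_βstar]; ring, fun β hβ => ?_⟩
  rw [hsecond, hsecond, hβ, hmean βstar, hsum_βstar]
  have hsum_β : ∑ i, βstar i = ∑ i, β i := by linarith [hmean β]
  linarith [Finset.sum_sq_le_sum_sq_of_sum_eq Finset.univ (fun i _ => hβstar' i) hsum_β]
end
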